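/- arXiv:2109.06985 — 4 statements merged into one kernel-verified Lean document; each statement's English description precedes it below -/
import Mathlib

section
/- Let (bσ)_{|σ|=k} and (cτ)_{|τ|=n} be finitely supported families of complex numbers indexed by words of length k (resp. n) over a countable alphabet, and for 0 ≤ j ≤ min(k,n) define d_{ρτ} = ∑_{|σ|=j} b_{ρσ} c_{στ} for |ρ| = k−j, |τ| = n−j (concatenation of words). Then ∑_{ρ,τ} |d_{ρτ}|² ≤ (∑_{|σ'|=k} |b_{σ'}|²)(∑_{|σ''|=n} |c_{σ''}|²). -/
/-- Combinatorial Cauchy–Schwarz for the middle-overlap convolution of coefficient families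
indexed by words: if `b` is supported on words of length `k` and `c` on words of length `n`,
and `d ρ τ = ∑_{|σ| = j} b (ρσ) c (στ)`, then `‖d‖₂² ≤ ‖b‖₂² ‖c‖₂²`. -/
theorem middle_overlap_convolution_l2_bound
    {α : Type*} [Countable α] (k n j : ℕ) (hj : j ≤ min k n)
    (b c : List α →₀ ℂ)
    (hb : ∀ σ ∈ b.support, σ.length = k)
    (hc : ∀ τ ∈ c.support, τ.length = n) :
    (∑' p : {ρ : List α // ρ.length = k - j} × {τ : List α // τ.length = n - j},
        ‖∑' σ : {σ : List α // σ.length = j},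
            b ((p.1 : List α) ++ (σ : List α)) * c ((σ : List α) ++ (p.2 : List α))‖ ^ 2)
      ≤ (∑' σ' : {σ' : List α // σ'.length = k}, ‖b (σ' : List α)‖ ^ 2) *
        (∑' σ'' : {σ'' : List α // σ''.length = n}, ‖c (σ'' : List α)‖ ^ 2) := by
  classical
  have hjk : j ≤ k := hj.trans (min_le_left _ _)
  have hjn : j ≤ n := hj.trans (min_le_right _ _)
  set sJ : Finset {σ : List α // σ.length = j} :=
    ((b.support.image (List.drop (k - j)) ∪ c.support.image (List.take j)).subtype
      (fun σ => σ.length = j)) with hsJ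
  set sK : Finset {ρ : List α // ρ.length = k - j} :=
    ((b.support.image (List.take (k - j))).subtype (fun ρ => ρ.length = k - j)) with hsK
  set sN : Finset {τ : List α // τ.length = n - j} :=
    ((c.support.image (List.drop j)).subtype (fun τ => τ.length = n - j)) with hsN
  set sB : Finset {w : List α // w.length = k} := (b.support.subtype (fun w => w.length = k))
    with hsB
  set sC : Finset {w : List α // w.length = n} := (c.support.subtype (fun w => w.length = n))
    with hsC
  -- membership facts
  have hbK : ∀ (ρ : {ρ : List α // ρ.length = k - j}) (σ : {σ : List α // σ.length = j}),
      b ((ρ : List α) ++ (σ : List α)) ≠ 0 → ρ ∈ sK ∧ σ ∈ sJ := by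
    intro ρ σ h
    have hmem : (ρ : List α) ++ (σ : List α) ∈ b.support := Finsupp.mem_support_iff.mpr h
    constructor
    · rw [hsK, Finset.mem_subtype]
      exact Finset.mem_image.mpr ⟨_, hmem, List.take_left' ρ.2⟩
    · rw [hsJ, Finset.mem_subtype, Finset.mem_union]
      exact Or.inl (Finset.mem_image.mpr ⟨_, hmem, List.drop_left' ρ.2⟩)
  have hcN : ∀ (σ : {σ : List α // σ.length = j}) (τ : {τ : List α // τ.length = n - j}),
      c ((σ : List α) ++ (τ : List α)) ≠ 0 → σ ∈ sJ ∧ τ ∈ sN := by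
    intro σ τ h
    have hmem : (σ : List α) ++ (τ : List α) ∈ c.support := Finsupp.mem_support_iff.mpr h
    constructor
    · rw [hsJ, Finset.mem_subtype, Finset.mem_union]
      exact Or.inr (Finset.mem_image.mpr ⟨_, hmem, List.take_left' σ.2⟩)
    · rw [hsN, Finset.mem_subtype]
      exact Finset.mem_image.mpr ⟨_, hmem, List.drop_left' σ.2⟩
  -- inner tsum as finite sum
  have hinner : ∀ p : {ρ : List α // ρ.length = k - j} × {τ : List α // τ.length = n - j},
      (∑' σ : {σ : List α // σ.length = j},
          b ((p.1 : List α) ++ (σ : List α)) * c ((σ : List α) ++ (p.2 : List α)))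
        = ∑ σ ∈ sJ, b ((p.1 : List α) ++ (σ : List α)) * c ((σ : List α) ++ (p.2 : List α)) := by
    intro p
    refine tsum_eq_sum ?_
    intro σ hσ
    by_contra h
    rcases mul_ne_zero_iff.mp h with ⟨h1, _⟩
    exact hσ (hbK p.1 σ h1).2
  -- outer tsum as finite sum
  have hL : (∑' p : {ρ : List α // ρ.length = k - j} × {τ : List α // τ.length = n - j},
      ‖∑' σ : {σ : List α // σ.length = j},
          b ((p.1 : List α) ++ (σ : List α)) * c ((σ : List α) ++ (p.2 : List α))‖ ^ 2)
      = ∑ p ∈ sK ×ˢ sN,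
        ‖∑ σ ∈ sJ, b ((p.1 : List α) ++ (σ : List α)) * c ((σ : List α) ++ (p.2 : List α))‖ ^ 2 := by
    rw [tsum_congr (fun p => by rw [hinner p])]
    refine tsum_eq_sum ?_
    intro p hp
    have hp' : p.1 ∉ sK ∨ p.2 ∉ sN := by
      by_contra h
      push_neg at h
      exact hp (Finset.mem_product.mpr ⟨h.1, h.2⟩)
    have : (∑ σ ∈ sJ, b ((p.1 : List α) ++ (σ : List α)) * c ((σ : List α) ++ (p.2 : List α))) = 0 := by
      refine Finset.sum_eq_zero ?_
      intro σ _
      rcases hp' with h | h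
      · by_contra hne
        rcases mul_ne_zero_iff.mp hne with ⟨h1, _⟩
        exact h (hbK p.1 σ h1).1
      · by_contra hne
        rcases mul_ne_zero_iff.mp hne with ⟨_, h2⟩
        exact h (hcN σ p.2 h2).2
    rw [this, norm_zero]
    norm_num
  have hRb : (∑' σ' : {σ' : List α // σ'.length = k}, ‖b (σ' : List α)‖ ^ 2)
      = ∑ w ∈ sB, ‖b (w : List α)‖ ^ 2 := by
    refine tsum_eq_sum ?_
    intro w hw
    have : b (w : List α) = 0 := by
      by_contra h
      exact hw (by rw [hsB, Finset.mem_subtype]; exact Finsupp.mem_support_iff.mpr h)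
    rw [this, norm_zero]; norm_num
  have hRc : (∑' σ'' : {σ'' : List α // σ''.length = n}, ‖c (σ'' : List α)‖ ^ 2)
      = ∑ w ∈ sC, ‖c (w : List α)‖ ^ 2 := by
    refine tsum_eq_sum ?_
    intro w hw
    have : c (w : List α) = 0 := by
      by_contra h
      exact hw (by rw [hsC, Finset.mem_subtype]; exact Finsupp.mem_support_iff.mpr h)
    rw [this, norm_zero]; norm_num
  rw [hL, hRb, hRc]
  -- Cauchy–Schwarz per point
  have step1 : ∀ p ∈ sK ×ˢ sN,
      ‖∑ σ ∈ sJ, b ((p.1 : List α) ++ (σ : List α)) * c ((σ : List α) ++ (p.2 : List α))‖ ^ 2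
        ≤ (∑ σ ∈ sJ, ‖b ((p.1 : List α) ++ (σ : List α))‖ ^ 2) *
          (∑ σ ∈ sJ, ‖c ((σ : List α) ++ (p.2 : List α))‖ ^ 2) := by
    intro p _
    have h1 : ‖∑ σ ∈ sJ, b ((p.1 : List α) ++ (σ : List α)) * c ((σ : List α) ++ (p.2 : List α))‖
        ≤ ∑ σ ∈ sJ, ‖b ((p.1 : List α) ++ (σ : List α))‖ * ‖c ((σ : List α) ++ (p.2 : List α))‖ := by
      refine (norm_sum_le _ _).trans ?_
      exact le_of_eq (Finset.sum_congr rfl (fun σ _ => norm_mul _ _))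
    calc ‖∑ σ ∈ sJ, b ((p.1 : List α) ++ (σ : List α)) * c ((σ : List α) ++ (p.2 : List α))‖ ^ 2
        ≤ (∑ σ ∈ sJ, ‖b ((p.1 : List α) ++ (σ : List α))‖ * ‖c ((σ : List α) ++ (p.2 : List α))‖) ^ 2 := by
          refine pow_le_pow_left₀ (norm_nonneg _) h1 2
      _ ≤ _ := Finset.sum_mul_sq_le_sq_mul_sq _ _ _
  have step2 : (∑ p ∈ sK ×ˢ sN,
      ‖∑ σ ∈ sJ, b ((p.1 : List α) ++ (σ : List α)) * c ((σ : List α) ++ (p.2 : List α))‖ ^ 2)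
      ≤ (∑ ρ ∈ sK, ∑ σ ∈ sJ, ‖b ((ρ : List α) ++ (σ : List α))‖ ^ 2) *
        (∑ τ ∈ sN, ∑ σ ∈ sJ, ‖c ((σ : List α) ++ (τ : List α))‖ ^ 2) := by
    refine (Finset.sum_le_sum step1).trans ?_
    rw [Finset.sum_mul_sum]
    rw [Finset.sum_product]
  -- bound the b-factor
  have hbfac : (∑ ρ ∈ sK, ∑ σ ∈ sJ, ‖b ((ρ : List α) ++ (σ : List α))‖ ^ 2)
      ≤ ∑ w ∈ sB, ‖b (w : List α)‖ ^ 2 := by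
    rw [← Finset.sum_product']
    set φ : {ρ : List α // ρ.length = k - j} × {σ : List α // σ.length = j} →
        {w : List α // w.length = k} :=
      fun q => ⟨(q.1 : List α) ++ (q.2 : List α), by
        rw [List.length_append, q.1.2, q.2.2]; omega⟩ with hφ
    have hinj : Function.Injective φ := by
      intro q1 q2 h
      have hval : (q1.1 : List α) ++ (q1.2 : List α) = (q2.1 : List α) ++ (q2.2 : List α) :=
        congrArg Subtype.val h
      have h1 : (q1.1 : List α) = (q2.1 : List α) := by
        have := congrArg (List.take (k - j)) hval
        rwa [List.take_left' q1.1.2, List.take_left' q2.1.2] at this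
      have h2 : (q1.2 : List α) = (q2.2 : List α) := by
        have := congrArg (List.drop (k - j)) hval
        rwa [List.drop_left' q1.1.2, List.drop_left' q2.1.2] at this
      exact Prod.ext (Subtype.ext h1) (Subtype.ext h2)
    have himg : (∑ q ∈ sK ×ˢ sJ, ‖b ((q.1 : List α) ++ (q.2 : List α))‖ ^ 2)
        = ∑ w ∈ (sK ×ˢ sJ).image φ, ‖b (w : List α)‖ ^ 2 := by
      rw [Finset.sum_image (fun x _ y _ h => hinj h)]
    rw [himg]
    rw [← Finset.sum_filter_of_ne (p := fun w => w ∈ sB)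
      (fun w _ hne => by
        have : b (w : List α) ≠ 0 := by
          intro h0; apply hne; rw [h0, norm_zero]; norm_num
        exact Finset.mem_subtype.mpr (Finsupp.mem_support_iff.mpr this))]
    refine Finset.sum_le_sum_of_subset_of_nonneg ?_ ?_
    · intro w hw; exact (Finset.mem_filter.mp hw).2
    · intro w _ _; positivity
  -- bound the c-factor
  have hcfac : (∑ τ ∈ sN, ∑ σ ∈ sJ, ‖c ((σ : List α) ++ (τ : List α))‖ ^ 2)
      ≤ ∑ w ∈ sC, ‖c (w : List α)‖ ^ 2 := by
    rw [← Finset.sum_product']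
    set ψ : {τ : List α // τ.length = n - j} × {σ : List α // σ.length = j} →
        {w : List α // w.length = n} :=
      fun q => ⟨(q.2 : List α) ++ (q.1 : List α), by
        rw [List.length_append, q.1.2, q.2.2]; omega⟩ with hψ
    have hinj : Function.Injective ψ := by
      intro q1 q2 h
      have hval : (q1.2 : List α) ++ (q1.1 : List α) = (q2.2 : List α) ++ (q2.1 : List α) :=
        congrArg Subtype.val h
      have h2 : (q1.2 : List α) = (q2.2 : List α) := by
        have := congrArg (List.take j) hval
        rwa [List.take_left' q1.2.2, List.take_left' q2.2.2] at this
      have h1 : (q1.1 : List α) = (q2.1 : List α) := by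
        have := congrArg (List.drop j) hval
        rwa [List.drop_left' q1.2.2, List.drop_left' q2.2.2] at this
      exact Prod.ext (Subtype.ext h1) (Subtype.ext h2)
    have himg : (∑ q ∈ sN ×ˢ sJ, ‖c ((q.2 : List α) ++ (q.1 : List α))‖ ^ 2)
        = ∑ w ∈ (sN ×ˢ sJ).image ψ, ‖c (w : List α)‖ ^ 2 := by
      rw [Finset.sum_image (fun x _ y _ h => hinj h)]
    rw [himg]
    rw [← Finset.sum_filter_of_ne (p := fun w => w ∈ sC)
      (fun w _ hne => by
        have : c (w : List α) ≠ 0 := by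
          intro h0; apply hne; rw [h0, norm_zero]; norm_num
        exact Finset.mem_subtype.mpr (Finsupp.mem_support_iff.mpr this))]
    refine Finset.sum_le_sum_of_subset_of_nonneg ?_ ?_
    · intro w hw; exact (Finset.mem_filter.mp hw).2
    · intro w _ _; positivity
  refine step2.trans ?_
  refine mul_le_mul hbfac hcfac ?_ ?_
  · refine Finset.sum_nonneg (fun τ _ => Finset.sum_nonneg (fun σ _ => by positivity))
  · refine Finset.sum_nonneg (fun w _ => by positivity)
end

section
/- Let H be a Hilbert space with an orthogonal decomposition H = ⊕_{n≥0} Wₙ into closed subspaces, let Pₙ be the orthogonal projection onto Wₙ, and let x be a bounded operator on H such that Pₘ x Pₙ = 0 whenever |m − n| > k (for some fixed k). Let N = ∑ n Pₙ be the (unbounded) number operator. Then the commutator [N, x] is densely defined and extends to a bounded operator with ‖[N,x]‖ ≤ k ‖x‖ · (2k+1) (in fact a bound C(k)·‖x‖ for some constant depending only on k suffices). -/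
/-!
Build `[N, x]` row by row. For `x` of band width `k`, the `m`-th row is
`Pₘ [N, x] = ∑_{|m - n| ≤ k} (m - n) Pₘ x Pₙ`, so
`‖Pₘ [N, x] v‖² ≤ k² ‖x‖² ∑_{|m - n| ≤ k} ‖Pₙ v‖²`. The rows take values in the mutually
orthogonal `Wₘ`, and each `Pₙ v` occurs in at most `2k + 1` rows. By Bessel's inequality,
`∑ₘ ‖Pₘ [N, x] v‖² ≤ k² (2k + 1) ‖x‖² ‖v‖²`, so the orthogonal series `∑ₘ Pₘ [N, x] v`
converges and defines a bounded operator.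
-/

open scoped InnerProductSpace
open Finset Submodule

section OrthogonalFamily

variable {ι 𝕜 E : Type*} [RCLike 𝕜] [NormedAddCommGroup E] [InnerProductSpace 𝕜 E]
  {W : ι → Submodule 𝕜 E}

theorem OrthogonalFamily.exists_hasSum_of_sum_norm_sq_le [CompleteSpace E]
    (hW : OrthogonalFamily 𝕜 (fun i => W i) fun i => (W i).subtypeₗᵢ)
    (T : ι → E →L[𝕜] E) (hT : ∀ i v, T i v ∈ W i) {C : ℝ} (hC : 0 ≤ C)
    (hbound : ∀ v s, ∑ i ∈ s, ‖T i v‖ ^ 2 ≤ (C * ‖v‖) ^ 2) :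
    ∃ y : E →L[𝕜] E, ‖y‖ ≤ C ∧ ∀ v, HasSum (fun i => T i v) (y v) := by
  have hnorm_sum (v : E) (s : Finset ι) : ‖∑ i ∈ s, T i v‖ ^ 2 = ∑ i ∈ s, ‖T i v‖ ^ 2 :=
    hW.norm_sum (fun i => ⟨T i v, hT i v⟩) s
  have hsummable (v : E) : Summable fun i => T i v :=
    (hW.summable_iff_norm_sq_summable fun i => ⟨T i v, hT i v⟩).mpr <|
      summable_of_sum_le (fun _ => sq_nonneg _) (hbound v)
  have hle (v : E) : ‖∑' i, T i v‖ ≤ C * ‖v‖ := by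
    refine le_of_tendsto' (hsummable v).hasSum.norm fun s => ?_
    rw [← pow_le_pow_iff_left₀ (norm_nonneg _) (by positivity) two_ne_zero, hnorm_sum]
    exact hbound v s
  let y : E →ₗ[𝕜] E :=
    { toFun v := ∑' i, T i v
      map_add' u v := by simpa only [map_add] using (hsummable u).tsum_add (hsummable v)
      map_smul' c v := by
        simpa only [map_smul, RingHom.id_apply] using (hsummable v).tsum_const_smul c }
  exact ⟨y.mkContinuous C hle, y.mkContinuous_norm_le hC hle, fun v => (hsummable v).hasSum⟩

variable [∀ i, (W i).HasOrthogonalProjection]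

theorem OrthogonalFamily.starProjection_apply_starProjection [DecidableEq ι]
    (hW : OrthogonalFamily 𝕜 (fun i => W i) fun i => (W i).subtypeₗᵢ) (i j : ι) (v : E) :
    (W i).starProjection ((W j).starProjection v) =
      if i = j then (W j).starProjection v else 0 := by
  split_ifs with hij
  · subst hij
    exact starProjection_eq_self_iff.mpr (starProjection_apply_mem _ v)
  · simpa using ContinuousLinearMap.ext_iff.mp
      (hW.isOrtho hij).starProjection_comp_starProjection v

theorem OrthogonalFamily.sum_norm_sq_starProjection_le
    (hW : OrthogonalFamily 𝕜 (fun i => W i) fun i => (W i).subtypeₗᵢ) (v : E) (s : Finset ι) :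
    ∑ i ∈ s, ‖(W i).starProjection v‖ ^ 2 ≤ ‖v‖ ^ 2 := by
  set w := ∑ i ∈ s, (W i).starProjection v
  have hw : ‖w‖ ^ 2 = ∑ i ∈ s, ‖(W i).starProjection v‖ ^ 2 :=
    hW.norm_sum (fun i => (W i).orthogonalProjectionOnto v) s
  have hwv : ‖w‖ ^ 2 ≤ ‖w‖ * ‖v‖ := calc
    ‖w‖ ^ 2 = RCLike.re ⟪w, v⟫_𝕜 := by
      simp only [hw, w, sum_inner, map_sum, re_inner_starProjection_eq_normSq]; rfl
    _ ≤ ‖w‖ * ‖v‖ := re_inner_le_norm w v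
  rw [← hw]
  nlinarith [norm_nonneg w, norm_nonneg v]

theorem eq_zero_of_forall_starProjection_eq_zero [CompleteSpace E]
    (hdense : (⨆ i, W i).topologicalClosure = ⊤) {u : E} (hu : ∀ i, (W i).starProjection u = 0) :
    u = 0 := by
  have hu' : u ∈ (⨆ i, W i)ᗮ := by
    rw [← iInf_orthogonal, mem_iInf]
    exact fun i => (W i).starProjection_apply_eq_zero_iff.mp (hu i)
  rwa [topologicalClosure_eq_top_iff.mp hdense, mem_bot] at hu'

theorem OrthogonalFamily.sum_starProjection_eq_self [CompleteSpace E]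
    (hW : OrthogonalFamily 𝕜 (fun i => W i) fun i => (W i).subtypeₗᵢ)
    (hdense : (⨆ i, W i).topologicalClosure = ⊤) {u : E} {s : Finset ι}
    (hs : ∀ i ∉ s, (W i).starProjection u = 0) :
    ∑ i ∈ s, (W i).starProjection u = u := by
  classical
  refine (sub_eq_zero.mp (eq_zero_of_forall_starProjection_eq_zero hdense fun j => ?_)).symm
  rw [map_sub, map_sum]
  simp only [hW.starProjection_apply_starProjection, sum_ite_eq]
  split_ifs with hj
  · exact sub_self _
  · rw [hs j hj, sub_zero]

end OrthogonalFamily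

theorem mem_Icc_sub_add_iff_abs_sub_le {m n k : ℕ} :
    n ∈ Icc (m - k) (m + k) ↔ |(m : ℤ) - n| ≤ k := by
  rw [mem_Icc, abs_le]
  omega

theorem mem_Icc_sub_add_comm {m n k : ℕ} :
    n ∈ Icc (m - k) (m + k) ↔ m ∈ Icc (n - k) (n + k) := by
  rw [mem_Icc_sub_add_iff_abs_sub_le, mem_Icc_sub_add_iff_abs_sub_le, abs_sub_comm]

theorem sum_sum_Icc_sub_add_le (k : ℕ) {a : ℕ → ℝ} (ha : ∀ n, 0 ≤ a n) {B : ℝ}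
    (hB : ∀ t : Finset ℕ, ∑ n ∈ t, a n ≤ B) (s : Finset ℕ) :
    ∑ m ∈ s, ∑ n ∈ Icc (m - k) (m + k), a n ≤ (2 * k + 1) * B := by
  classical
  calc ∑ m ∈ s, ∑ n ∈ Icc (m - k) (m + k), a n
      = ∑ n ∈ s.biUnion (fun m => Icc (m - k) (m + k)), ∑ m ∈ s ∩ Icc (n - k) (n + k), a n :=
        sum_comm' fun m n => by
          rw [mem_inter, mem_biUnion, ← @mem_Icc_sub_add_comm m n k]
          exact ⟨fun h => ⟨h, m, h⟩, fun h => h.1⟩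
    _ ≤ ∑ n ∈ s.biUnion (fun m => Icc (m - k) (m + k)), (2 * k + 1) * a n := by
        gcongr with n
        rw [sum_const, nsmul_eq_mul]
        have hcard : #(s ∩ Icc (n - k) (n + k)) ≤ 2 * k + 1 :=
          (card_le_card inter_subset_right).trans (by rw [Nat.card_Icc]; omega)
        exact mul_le_mul_of_nonneg_right (by exact_mod_cast hcard) (ha n)
    _ ≤ (2 * k + 1) * B := by
        rw [← mul_sum]
        gcongr
        exact hB _

section BandWidth

variable {𝕜 E : Type*} [RCLike 𝕜] [NormedAddCommGroup E] [InnerProductSpace 𝕜 E]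
  {W : ℕ → Submodule 𝕜 E} [∀ n, (W n).HasOrthogonalProjection]

variable (W) in
def HasBandWidth (k : ℕ) (x : E →L[𝕜] E) : Prop :=
  ∀ m n : ℕ, (k : ℤ) < |(m : ℤ) - n| → (W m).starProjection ∘L x ∘L (W n).starProjection = 0

theorem HasBandWidth.starProjection_apply_eq_zero {k : ℕ} {x : E →L[𝕜] E}
    (hx : HasBandWidth W k x) {m n : ℕ} (hmn : n ∉ Icc (m - k) (m + k)) {v : E} (hv : v ∈ W n) :
    (W m).starProjection (x v) = 0 := by
  rw [mem_Icc_sub_add_iff_abs_sub_le, not_le] at hmn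
  simpa [starProjection_eq_self_iff.mpr hv] using ContinuousLinearMap.ext_iff.mp (hx m n hmn) v

variable (W) in
noncomputable def numberCommutatorRow (k : ℕ) (x : E →L[𝕜] E) (m : ℕ) : E →L[𝕜] E :=
  (W m).starProjection ∘L x ∘L ∑ n ∈ Icc (m - k) (m + k), ((m : 𝕜) - n) • (W n).starProjection

theorem numberCommutatorRow_apply_mem (k : ℕ) (x : E →L[𝕜] E) (m : ℕ) (v : E) :
    numberCommutatorRow W k x m v ∈ W m :=
  starProjection_apply_mem _ _

theorem norm_natCast_sub_natCast_le {m n k : ℕ} (h : n ∈ Icc (m - k) (m + k)) :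
    ‖(m : 𝕜) - n‖ ≤ k := by
  rw [show (m : 𝕜) - n = ((m - n : ℝ) : 𝕜) by push_cast; rfl, RCLike.norm_ofReal]
  exact_mod_cast mem_Icc_sub_add_iff_abs_sub_le.mp h

theorem norm_sq_numberCommutatorRow_apply_le
    (hW : OrthogonalFamily 𝕜 (fun n => W n) fun n => (W n).subtypeₗᵢ)
    (k : ℕ) (x : E →L[𝕜] E) (m : ℕ) (v : E) :
    ‖numberCommutatorRow W k x m v‖ ^ 2 ≤
      (k * ‖x‖) ^ 2 * ∑ n ∈ Icc (m - k) (m + k), ‖(W n).starProjection v‖ ^ 2 := by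
  set D := ∑ n ∈ Icc (m - k) (m + k), ((m : 𝕜) - n) • (W n).starProjection
  have hD : ‖D v‖ ^ 2 ≤ k ^ 2 * ∑ n ∈ Icc (m - k) (m + k), ‖(W n).starProjection v‖ ^ 2 := by
    have hD_eq : ‖D v‖ ^ 2 =
        ∑ n ∈ Icc (m - k) (m + k), ‖(m : 𝕜) - n‖ ^ 2 * ‖(W n).starProjection v‖ ^ 2 := by
      simpa [D, norm_smul, mul_pow] using hW.norm_sum
        (fun n => ((m : 𝕜) - n) • (W n).orthogonalProjectionOnto v) (Icc (m - k) (m + k))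
    rw [hD_eq, mul_sum]
    gcongr with n hn
    exact norm_natCast_sub_natCast_le hn
  calc ‖numberCommutatorRow W k x m v‖ ^ 2 ≤ (‖x‖ * ‖D v‖) ^ 2 := by
        gcongr
        exact (norm_starProjection_apply_le _ _).trans (x.le_opNorm _)
    _ ≤ ‖x‖ ^ 2 * (k ^ 2 * ∑ n ∈ Icc (m - k) (m + k), ‖(W n).starProjection v‖ ^ 2) := by
        rw [mul_pow]
        gcongr
    _ = _ := by ring

theorem sum_norm_sq_numberCommutatorRow_apply_le
    (hW : OrthogonalFamily 𝕜 (fun n => W n) fun n => (W n).subtypeₗᵢ)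
    (k : ℕ) (x : E →L[𝕜] E) (v : E) (s : Finset ℕ) :
    ∑ m ∈ s, ‖numberCommutatorRow W k x m v‖ ^ 2 ≤ (k * (2 * k + 1) * ‖x‖ * ‖v‖) ^ 2 := calc
  _ ≤ ∑ m ∈ s, (k * ‖x‖) ^ 2 * ∑ n ∈ Icc (m - k) (m + k), ‖(W n).starProjection v‖ ^ 2 :=
      sum_le_sum fun m _ => norm_sq_numberCommutatorRow_apply_le hW k x m v
  _ ≤ (k * ‖x‖) ^ 2 * ((2 * k + 1) * ‖v‖ ^ 2) := by
      rw [← mul_sum]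
      gcongr
      exact sum_sum_Icc_sub_add_le k (fun _ => sq_nonneg _) (hW.sum_norm_sq_starProjection_le v) s
  _ ≤ (k * ‖x‖) ^ 2 * ((2 * k + 1) ^ 2 * ‖v‖ ^ 2) := by
      -- the sharper constant `k √(2k + 1)` is given up here
      gcongr
      nlinarith
  _ = _ := by ring

theorem numberCommutatorRow_apply_of_mem
    (hW : OrthogonalFamily 𝕜 (fun n => W n) fun n => (W n).subtypeₗᵢ) {k : ℕ} {x : E →L[𝕜] E}
    (hx : HasBandWidth W k x) {n : ℕ} {v : E} (hv : v ∈ W n) (m : ℕ) :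
    numberCommutatorRow W k x m v = ((m : 𝕜) - n) • (W m).starProjection (x v) := by
  classical
  have hPv (j : ℕ) : (W j).starProjection v = if j = n then v else 0 := by
    have := hW.starProjection_apply_starProjection j n v
    rwa [starProjection_eq_self_iff.mpr hv] at this
  simp only [numberCommutatorRow, ContinuousLinearMap.comp_apply, FunLike.coe_sum,
    Finset.sum_apply, FunLike.coe_smul, Pi.smul_apply, hPv, smul_ite, smul_zero, sum_ite_eq']
  split_ifs with hn
  · rw [map_smul, map_smul]
  · rw [map_zero, map_zero, hx.starProjection_apply_eq_zero hn hv, smul_zero]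

end BandWidth

/-- Ozawa–Rieffel boundedness of the commutator with the number operator.  Let
`H = ⊕ₙ Wₙ` be an orthogonal decomposition of a Hilbert space with orthogonal projections
`Q n` onto `Wₙ`, and let `x` be a bounded operator of band width `k`, i.e. `Qₘ x Qₙ = 0`
whenever `|m - n| > k`.  Then the commutator `[N, x]` with the number operator `N = ∑ n Qₙ`
is densely defined (on `⋃ₙ (W₀ ⊕ ⋯ ⊕ Wₙ)`) and extends to a bounded operator `y` of norm at
most `k(2k+1)‖x‖`; on a vector `v ∈ Wₙ` it acts by `y v = N(x v) - n • (x v)`, where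
`N(x v) = ∑ₘ m • Qₘ (x v)` (a finite sum by the band condition). -/
theorem number_operator_commutator_bounded
    {H : Type*} [NormedAddCommGroup H] [InnerProductSpace ℂ H] [CompleteSpace H]
    (W : ℕ → Submodule ℂ H) [∀ n, CompleteSpace (W n)]
    (horth : ∀ m n, m ≠ n → ∀ u ∈ W m, ∀ v ∈ W n, inner (𝕜 := ℂ) u v = 0)
    (hdense : (⨆ n, W n).topologicalClosure = ⊤)
    (Q : ℕ → H →L[ℂ] H)
    (hQ : ∀ n, Q n = (W n).subtypeL.comp ((W n).orthogonalProjection))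
    (k : ℕ) (x : H →L[ℂ] H)
    (hband : ∀ m n : ℕ, (k : ℤ) < |(m : ℤ) - (n : ℤ)| → (Q m).comp (x.comp (Q n)) = 0) :
    ∃ y : H →L[ℂ] H, ‖y‖ ≤ (k : ℝ) * (2 * (k : ℝ) + 1) * ‖x‖ ∧
      ∀ n : ℕ, ∀ v ∈ W n,
        y v = (∑' m : ℕ, (m : ℂ) • Q m (x v)) - (n : ℂ) • x v := by
  obtain rfl : Q = fun n => (W n).starProjection := funext hQ
  have hW : OrthogonalFamily ℂ (fun n => W n) fun n => (W n).subtypeₗᵢ :=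
    orthogonalFamily_iff_pairwise.mpr fun m n hmn => isOrtho_iff_inner_eq.mpr (horth m n hmn)
  have hx : HasBandWidth W k x := hband
  obtain ⟨y, hy_norm, hy⟩ := hW.exists_hasSum_of_sum_norm_sq_le (numberCommutatorRow W k x)
    (numberCommutatorRow_apply_mem k x) (by positivity)
    (sum_norm_sq_numberCommutatorRow_apply_le hW k x)
  refine ⟨y, hy_norm, fun n v hv => ?_⟩
  set s := Icc (n - k) (n + k)
  have hsupp (m : ℕ) (hm : m ∉ s) : (W m).starProjection (x v) = 0 :=
    hx.starProjection_apply_eq_zero (mem_Icc_sub_add_comm.not.mp hm) hv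
  have hxv : ∑ m ∈ s, (W m).starProjection (x v) = x v :=
    hW.sum_starProjection_eq_self hdense hsupp
  have hrow : HasSum (fun m => numberCommutatorRow W k x m v)
      (∑ m ∈ s, ((m : ℂ) - n) • (W m).starProjection (x v)) := by
    simp_rw [numberCommutatorRow_apply_of_mem hW hx hv]
    exact hasSum_sum_of_ne_finset_zero fun m hm => by rw [hsupp m hm, smul_zero]
  rw [(hy v).unique hrow, tsum_eq_sum (s := s) fun m hm => by rw [hsupp m hm, smul_zero]]
  simp only [sub_smul, sum_sub_distrib, ← smul_sum, hxv]
end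

section
/- Let (Cₙ)ₙ be an increasing sequence of subsets of a normed space X (Cₘ ⊆ Cₙ for m ≤ n), and suppose there is K such that for all n > m > K, every element of Cₙ is a convex combination λy + (1−λ)z with y ∈ Cₘ and ‖z‖ < ε. Then dist_H(Cₘ, Cₙ) ≤ 2ε for all n > m > K, provided 0 ∈ Cₘ. -/
open Metric

/-- If `(Cₙ)` is an increasing sequence of convex subsets of a normed space containing `0`
(for indices beyond `K`), and for all `n > m > K` every element of `Cₙ` is a convex combination
`λ•y + (1-λ)•z` with `y ∈ Cₘ` and `‖z‖ < ε`, then `dist_H(Cₘ, Cₙ) ≤ 2ε` for all `n > m > K`. -/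
theorem hausdorffDist_le_of_convex_tail_bound
    {X : Type*} [NormedAddCommGroup X] [NormedSpace ℝ X]
    (C : ℕ → Set X) (hmono : ∀ m n : ℕ, m ≤ n → C m ⊆ C n)
    (hconv : ∀ m : ℕ, Convex ℝ (C m))
    (K : ℕ) (ε : ℝ) (hε : 0 < ε)
    (h0 : ∀ m : ℕ, K < m → (0 : X) ∈ C m)
    (hsplit : ∀ m n : ℕ, K < m → m < n → ∀ x ∈ C n,
      ∃ l : ℝ, l ∈ Set.Icc (0 : ℝ) 1 ∧ ∃ y ∈ C m, ∃ z : X, ‖z‖ < ε ∧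
        x = l • y + (1 - l) • z) :
    ∀ m n : ℕ, K < m → m < n → hausdorffDist (C m) (C n) ≤ 2 * ε := by
  intro m n hKm hmn
  apply hausdorffDist_le_of_mem_dist (by positivity)
  · intro x hx
    exact ⟨x, hmono m n hmn.le hx, by simp [dist_self]; positivity⟩
  · intro x hx
    obtain ⟨l, ⟨hl0, hl1⟩, y, hy, z, hz, hxe⟩ := hsplit m n hKm hmn x hx
    refine ⟨l • y, ?_, ?_⟩
    · have := (hconv m) hy (h0 m hKm) hl0 (by linarith) (add_tsub_cancel_of_le hl1)
      simpa using this
    · rw [hxe, dist_eq_norm]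
      have : l • y + (1 - l) • z - l • y = (1 - l) • z := by abel
      rw [this, norm_smul]
      have h1 : |1 - l| ≤ 1 := by rw [abs_le]; constructor <;> linarith
      calc |1 - l| * ‖z‖ ≤ 1 * ε := by
            apply mul_le_mul h1 hz.le (norm_nonneg z) one_pos.le
        _ ≤ 2 * ε := by linarith
end

section
/- Let Γ be a graph, let Π₀ be the set of loops based at a fixed vertex v₀, and for each loop σ of length n let Y_σ be the unique element of the loop algebra with Y_σ · v₀ = σ in the Fock space representation. Then in the free loop algebra, for an edge ε with source v₀-reachable and a loop τ = ε'τ', the product satisfies X_ε Y_τ = Y_{ετ} + δ_{ε^op = ε'} Y_{τ'}, where X_ε = a_ε ℓ(ε) + a_ε^{−1} ℓ(ε^op)* and Y_σ = ∑_{σ=ρτ} a_ρ a_τ^{−1} ℓ(ρ) ℓ(τ^op)*. -/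
noncomputable section

variable {V E B : Type*}

/-- The endpoint of a path `σ` starting at `v`. -/
def pathEnd (t : E → V) (v : V) (σ : List E) : V := σ.foldl (fun _ e => t e) v

/-- The opposite (reversed) path. -/
def opList (op : E → E) (σ : List E) : List E := (σ.map op).reverse

/-- The product `ℓ(σ) = ℓ(ε₁)⋯ℓ(εₙ)` of creation operators along a path, with the convention
that the empty path at the vertex `v` gives the projection `p v`. -/
def pathCreate [Ring B] (p : V → B) (ℓ : E → B) (v : V) (σ : List E) : B :=
  match σ with
  | [] => p v
  | _ => (σ.map ℓ).prod

/-- The Wick word `Y_σ = ∑_{σ = ρτ} a_ρ a_τ⁻¹ ℓ(ρ) ℓ(τ^op)*` of a path `σ` based at `v`,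
where `a_ρ` is the product of the edge weights along `ρ`. -/
def wick [Ring B] [Algebra ℂ B] [StarRing B]
    (t : E → V) (op : E → E) (a : E → ℝ) (p : V → B) (ℓ : E → B)
    (v : V) (σ : List E) : B :=
  ∑ j ∈ Finset.range (σ.length + 1),
    ((((σ.take j).map a).prod * ((((σ.drop j).map a).prod)⁻¹) : ℝ) : ℂ) •
      (pathCreate p ℓ v (σ.take j) *
        star (pathCreate p ℓ (pathEnd t v σ) (opList op (σ.drop j))))

/-- The edge element `X_ε = a_ε ℓ(ε) + a_ε⁻¹ ℓ(ε^op)*`. -/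
def edgeX [Ring B] [Algebra ℂ B] [StarRing B]
    (op : E → E) (a : E → ℝ) (ℓ : E → B) (ε : E) : B :=
  ((a ε : ℝ) : ℂ) • ℓ ε + (((a ε)⁻¹ : ℝ) : ℂ) • star (ℓ (op ε))

theorem pathEnd_cons (t : E → V) (v : V) (e : E) (σ : List E) :
    pathEnd t v (e :: σ) = pathEnd t (t e) σ := rfl

theorem pathEnd_concat (t : E → V) (v : V) (σ : List E) (e : E) :
    pathEnd t v (σ ++ [e]) = t e := by simp [pathEnd]

theorem opList_cons (op : E → E) (e : E) (σ : List E) :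
    opList op (e :: σ) = opList op σ ++ [op e] := by simp [opList]

theorem pathCreate_nil [Ring B] (p : V → B) (ℓ : E → B) (v : V) :
    pathCreate p ℓ v [] = p v := rfl

theorem pathCreate_cons [DecidableEq V] [Ring B] (t : E → V) (p : V → B) (ℓ : E → B)
    (hlp : ∀ (e : E) (v : V), ℓ e * p v = if t e = v then ℓ e else 0)
    (v : V) (e : E) (σ : List E) :
    pathCreate p ℓ v (e :: σ) = ℓ e * pathCreate p ℓ (t e) σ := by
  cases σ with
  | nil => simp [pathCreate, hlp]
  | cons f σ => simp [pathCreate]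

theorem pathCreate_ne_nil [Ring B] (p : V → B) (ℓ : E → B) (v : V) (σ : List E) (h : σ ≠ []) :
    pathCreate p ℓ v σ = (σ.map ℓ).prod := by
  cases σ with
  | nil => exact absurd rfl h
  | cons f σ => simp [pathCreate]

theorem pathCreate_concat [DecidableEq V] [Ring B] (s : E → V) (p : V → B) (ℓ : E → B)
    (hpl : ∀ (v : V) (e : E), p v * ℓ e = if s e = v then ℓ e else 0)
    (v : V) (e : E) (σ : List E) (hv : σ = [] → s e = v) :
    pathCreate p ℓ v (σ ++ [e]) = pathCreate p ℓ v σ * ℓ e := by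
  cases σ with
  | nil => simp [pathCreate, hpl, hv rfl]
  | cons f σ =>
    rw [pathCreate_ne_nil _ _ _ _ (by simp), pathCreate_ne_nil _ _ _ _ (by simp)]
    simp [mul_assoc]

theorem pathCreate_mul_p [DecidableEq V] [Ring B] (t : E → V) (p : V → B) (ℓ : E → B)
    (hpp : ∀ v w, p v * p w = if w = v then p v else 0)
    (hlp : ∀ (e : E) (v : V), ℓ e * p v = if t e = v then ℓ e else 0)
    (v : V) (σ : List E) :
    pathCreate p ℓ v σ * p (pathEnd t v σ) = pathCreate p ℓ v σ := by
  induction σ generalizing v with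
  | nil => simp [pathCreate, pathEnd, hpp]
  | cons e σ ih =>
    rw [pathCreate_cons t p ℓ hlp, pathEnd_cons, mul_assoc, ih]

theorem p_mul_pathCreate [DecidableEq V] [Ring B] (s : E → V) (p : V → B) (ℓ : E → B)
    (hpp : ∀ v w, p v * p w = if w = v then p v else 0)
    (hpl : ∀ (v : V) (e : E), p v * ℓ e = if s e = v then ℓ e else 0)
    (v w : V) (σ : List E)
    (h : ∀ e ∈ σ.head?, s e = w) (h2 : σ = [] → v = w) :
    p w * pathCreate p ℓ v σ = pathCreate p ℓ v σ := by
  cases σ with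
  | nil => simp [pathCreate, hpp, h2 rfl]
  | cons e σ =>
    rw [pathCreate_ne_nil _ _ _ _ (by simp)]
    simp only [List.map_cons, List.prod_cons, ← mul_assoc, hpl, h e (by simp)]
    simp

def wickTerm [Ring B] [Algebra ℂ B] [StarRing B]
    (t : E → V) (op : E → E) (a : E → ℝ) (p : V → B) (ℓ : E → B)
    (v : V) (σ : List E) (j : ℕ) : B :=
  ((((σ.take j).map a).prod * ((((σ.drop j).map a).prod)⁻¹) : ℝ) : ℂ) •
    (pathCreate p ℓ v (σ.take j) *
      star (pathCreate p ℓ (pathEnd t v σ) (opList op (σ.drop j))))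

theorem wick_eq [Ring B] [Algebra ℂ B] [StarRing B]
    (t : E → V) (op : E → E) (a : E → ℝ) (p : V → B) (ℓ : E → B)
    (v : V) (σ : List E) :
    wick t op a p ℓ v σ = ∑ j ∈ Finset.range (σ.length + 1), wickTerm t op a p ℓ v σ j := rfl

/-- The Wick word recursion (change-of-basis recursion) in the free graph algebra:
for an edge `ε` and a composable path `τ = ε' τ'`,
`X_ε Y_τ = Y_{ετ} + δ_{ε^op, ε'} Y_{τ'}`. -/
theorem edgeX_mul_wick [DecidableEq E] [DecidableEq V]
    [Ring B] [Algebra ℂ B] [StarRing B]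
    (s t : E → V) (op : E → E)
    (hop : Function.Involutive op)
    (hsop : ∀ e, s (op e) = t e) (htop : ∀ e, t (op e) = s e)
    (a : E → ℝ) (hapos : ∀ e, 0 < a e) (haop : ∀ e, a (op e) = (a e)⁻¹)
    (p : V → B) (ℓ : E → B)
    (hpstar : ∀ v, star (p v) = p v)
    (hpp : ∀ v w, p v * p w = if w = v then p v else 0)
    (hpl : ∀ (v : V) (e : E), p v * ℓ e = if s e = v then ℓ e else 0)
    (hlp : ∀ (e : E) (v : V), ℓ e * p v = if t e = v then ℓ e else 0)
    (hll : ∀ e f : E, star (ℓ e) * ℓ f =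
      if f = e then ((((a e) ^ 2)⁻¹ : ℝ) : ℂ) • p (t e) else 0)
    (ε ε' : E) (τ' : List E)
    (hpath : List.Chain' (fun e f => t e = s f) (ε :: ε' :: τ')) :
    edgeX op a ℓ ε * wick t op a p ℓ (s ε') (ε' :: τ') =
      wick t op a p ℓ (s ε) (ε :: ε' :: τ') +
        (if op ε = ε' then wick t op a p ℓ (t ε') τ' else 0) := by
  obtain ⟨hts, hchain⟩ := List.isChain_cons_cons.mp hpath
  have haεne : a ε ≠ 0 := (hapos ε).ne'
  have hhead : ∀ e ∈ τ'.head?, s e = t ε' := by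
    intro e he
    cases τ' with
    | nil => simp at he
    | cons f l =>
      simp only [List.head?_cons, Option.mem_some_iff] at he
      subst he
      exact ((List.isChain_cons_cons.mp hchain).1).symm
  have key1 : ∀ j ∈ Finset.range (τ'.length + 2),
      ((a ε : ℝ) : ℂ) • (ℓ ε * wickTerm t op a p ℓ (s ε') (ε' :: τ') j) =
        wickTerm t op a p ℓ (s ε) (ε :: ε' :: τ') (j + 1) := by
    intro j _
    simp only [wickTerm, List.take_succ_cons, List.drop_succ_cons, pathEnd_cons, hts,
      pathCreate_cons t p ℓ hlp]
    rw [mul_smul_comm, smul_smul, ← mul_assoc]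
    congr 1
    simp only [List.map_cons, List.prod_cons]
    push_cast
    ring
  have key2 : (((a ε)⁻¹ : ℝ) : ℂ) • (star (ℓ (op ε)) * wickTerm t op a p ℓ (s ε') (ε' :: τ') 0) =
      wickTerm t op a p ℓ (s ε) (ε :: ε' :: τ') 0 := by
    have h1 : star (ℓ (op ε)) * p (s ε') = star (ℓ (op ε)) := by
      conv_lhs => rw [← hpstar (s ε'), ← star_mul, hpl, if_pos (by rw [hsop, hts])]
    have hol : opList op (ε :: ε' :: τ') = opList op (ε' :: τ') ++ [op ε] :=
      opList_cons op ε (ε' :: τ')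
    have h2 : pathCreate p ℓ (pathEnd t (s ε') (ε' :: τ')) (opList op (ε' :: τ')) * ℓ (op ε) =
        pathCreate p ℓ (pathEnd t (s ε') (ε' :: τ')) (opList op (ε :: ε' :: τ')) := by
      rw [hol, pathCreate_concat s p ℓ hpl _ _ _ (by intro h; simp [opList] at h)]
    have h3 : pathCreate p ℓ (pathEnd t (s ε') (ε' :: τ')) (opList op (ε :: ε' :: τ')) * p (s ε) =
        pathCreate p ℓ (pathEnd t (s ε') (ε' :: τ')) (opList op (ε :: ε' :: τ')) := by
      have := pathCreate_mul_p t p ℓ hpp hlp (pathEnd t (s ε') (ε' :: τ'))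
        (opList op (ε :: ε' :: τ'))
      rw [hol, pathEnd_concat, htop] at this
      rw [hol]
      exact this
    simp only [wickTerm, List.take_zero, List.drop_zero, pathCreate_nil]
    rw [show pathEnd t (s ε) (ε :: ε' :: τ') = pathEnd t (s ε') (ε' :: τ') by
      rw [pathEnd_cons, hts]]
    rw [mul_smul_comm, smul_smul, ← mul_assoc, h1, ← star_mul, h2]
    rw [show p (s ε) * star (pathCreate p ℓ (pathEnd t (s ε') (ε' :: τ'))
          (opList op (ε :: ε' :: τ'))) =
        star (pathCreate p ℓ (pathEnd t (s ε') (ε' :: τ')) (opList op (ε :: ε' :: τ'))) by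
      rw [← hpstar (s ε), ← star_mul, h3]]
    congr 1
    simp only [List.map_cons, List.prod_cons, List.map_nil, List.prod_nil]
    push_cast [mul_inv]
    ring
  have key3 : ∀ j ∈ Finset.range (τ'.length + 1),
      (((a ε)⁻¹ : ℝ) : ℂ) • (star (ℓ (op ε)) * wickTerm t op a p ℓ (s ε') (ε' :: τ') (j + 1)) =
        (if op ε = ε' then wickTerm t op a p ℓ (t ε') τ' j else 0) := by
    intro j _
    simp only [wickTerm, List.take_succ_cons, List.drop_succ_cons, pathEnd_cons, hts,
      pathCreate_cons t p ℓ hlp]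
    rw [mul_smul_comm, smul_smul, ← mul_assoc, ← mul_assoc, hll]
    by_cases h : op ε = ε'
    · rw [if_pos h.symm, if_pos h]
      have hp : p (t (op ε)) * pathCreate p ℓ (t ε') (List.take j τ') =
          pathCreate p ℓ (t ε') (List.take j τ') := by
        rw [htop, show s ε = t ε' by rw [← htop ε, h]]
        refine p_mul_pathCreate s p ℓ hpp hpl _ _ _ ?_ (fun _ => rfl)
        intro e he
        apply hhead
        cases τ' with
        | nil => simp at he
        | cons f l =>
          cases j with
          | zero => simp at he
          | succ k => simpa using he
      rw [smul_mul_assoc, smul_mul_assoc, hp, smul_smul]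
      congr 1
      simp only [List.map_cons, List.prod_cons]
      rw [← h, haop]
      have hc : ((a ε : ℝ) : ℂ) ≠ 0 := by exact_mod_cast haεne
      have hQ : (0:ℝ) < (List.drop j (List.map a τ')).prod := by
        apply List.prod_pos
        intro x hx
        obtain ⟨e, -, rfl⟩ := List.mem_map.mp (List.mem_of_mem_drop hx)
        exact hapos e
      have hQc : ((List.drop j (List.map a τ')).prod : ℂ) ≠ 0 := by exact_mod_cast hQ.ne'
      push_cast
      field_simp
    · rw [if_neg h, if_neg (fun hh => h hh.symm)]
      simp
  rw [edgeX, wick_eq, wick_eq, add_mul, smul_mul_assoc, smul_mul_assoc,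
    Finset.mul_sum, Finset.mul_sum, Finset.smul_sum, Finset.smul_sum]
  simp only [List.length_cons]
  rw [Finset.sum_congr rfl key1, Finset.sum_range_succ'
    (fun j => (((a ε)⁻¹ : ℝ) : ℂ) • (star (ℓ (op ε)) * wickTerm t op a p ℓ (s ε') (ε' :: τ') j))
    (τ'.length + 1)]
  rw [Finset.sum_congr rfl key3, key2]
  rw [Finset.sum_range_succ' (fun j => wickTerm t op a p ℓ (s ε) (ε :: ε' :: τ') j)
    (τ'.length + 1 + 1)]
  rw [show (if op ε = ε' then wick t op a p ℓ (t ε') τ' else 0) =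
      ∑ j ∈ Finset.range (τ'.length + 1),
        (if op ε = ε' then wickTerm t op a p ℓ (t ε') τ' j else 0) from by
    split_ifs with h
    · rw [wick_eq]
    · simp]
  abel

end
end
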